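/- arXiv:math/0307102 — 5 statements merged into one kernel-verified Lean document; each statement's English description precedes it below -/
import Mathlib

section
/- Let N be a positive integer and equip ℝ³ with the quadratic form q(x,m,n) = 2N·x² + 2mn (the real quadratic space of the Lorentzian lattice ℤ(2N) ⊕ U, of signature (2,1)). For τ ∈ ℍ let w(τ) = (τ/√N, 1, −τ²) ∈ ℂ³ and let W(τ) ⊆ ℝ³ be the ℝ-linear span of the real part and the imaginary part of w(τ). Then for every τ ∈ ℍ the subspace W(τ) is 2-dimensional and q is positive definite on W(τ), and the map τ ↦ W(τ) is a bijection from ℍ onto the set of all 2-dimensional subspaces of ℝ³ on which q is positive definite (the Grassmannian of maximal positive definite subspaces). -/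
open scoped UpperHalfPlane

/-- The quadratic form `q(x, m, n) = 2N·x² + 2mn` on `ℝ³`,
the real quadratic space of the Lorentzian lattice `ℤ(2N) ⊕ U`. -/
noncomputable def qform (N : ℕ) (v : ℝ × ℝ × ℝ) : ℝ :=
  2 * N * v.1 ^ 2 + 2 * v.2.1 * v.2.2

/-- The vector `w(τ) = (τ/√N, 1, −τ²) ∈ ℂ³`. -/
noncomputable def wvec (N : ℕ) (τ : ℍ) : ℂ × ℂ × ℂ :=
  ((τ : ℂ) / (Real.sqrt N : ℂ), 1, -(τ : ℂ) ^ 2)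

/-- The real span `W(τ)` of the real and imaginary parts of `w(τ)`. -/
noncomputable def Wspan (N : ℕ) (τ : ℍ) : Submodule ℝ (ℝ × ℝ × ℝ) :=
  Submodule.span ℝ
    {((wvec N τ).1.re, (wvec N τ).2.1.re, (wvec N τ).2.2.re),
     ((wvec N τ).1.im, (wvec N τ).2.1.im, (wvec N τ).2.2.im)}

/-- Normal form for a 2-plane transverse to the isotropic vector. -/
noncomputable def Pspan (c d : ℝ) : Submodule ℝ (ℝ × ℝ × ℝ) :=
  Submodule.span ℝ {((0:ℝ), (1:ℝ), d), ((1:ℝ), (0:ℝ), c)}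

lemma mem_Pspan {c d : ℝ} {v : ℝ × ℝ × ℝ} :
    v ∈ Pspan c d ↔ ∃ s t : ℝ, v = (t, s, s * d + t * c) := by
  rw [Pspan, Submodule.mem_span_pair]
  constructor
  · rintro ⟨s, t, rfl⟩
    exact ⟨s, t, by simp [Prod.ext_iff]⟩
  · rintro ⟨s, t, rfl⟩
    exact ⟨s, t, by simp [Prod.ext_iff]⟩

lemma Pspan_indep (c d : ℝ) :
    LinearIndependent ℝ ![((0:ℝ), (1:ℝ), d), ((1:ℝ), (0:ℝ), c)] := by
  rw [LinearIndependent.pair_iff]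
  intro s t h
  simp [Prod.ext_iff] at h
  exact ⟨h.2.1, h.1⟩

lemma Pspan_rank (c d : ℝ) : Module.finrank ℝ (Pspan c d) = 2 := by
  have h : ({((0:ℝ), (1:ℝ), d), ((1:ℝ), (0:ℝ), c)} : Set (ℝ × ℝ × ℝ))
      = Set.range ![((0:ℝ), (1:ℝ), d), ((1:ℝ), (0:ℝ), c)] := by
    ext v
    simp [Fin.exists_fin_two, or_comm]
  rw [Pspan, h, finrank_span_eq_card (Pspan_indep c d)]
  simp

lemma Pspan_pos {N : ℕ} (hN : 0 < N) {c d : ℝ} (h : c ^ 2 < 4 * N * d) :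
    ∀ v ∈ Pspan c d, v ≠ 0 → 0 < qform N v := by
  intro v hv hv0
  obtain ⟨s, t, rfl⟩ := mem_Pspan.mp hv
  have hN' : (0:ℝ) < N := by exact_mod_cast hN
  have hst : s ≠ 0 ∨ t ≠ 0 := by
    by_contra h'
    push_neg at h'
    exact hv0 (by simp [h'.1, h'.2, Prod.ext_iff])
  unfold qform
  simp only
  rcases eq_or_ne s 0 with hs | hs
  · have ht : t ≠ 0 := by tauto
    subst hs
    have : 0 < t ^ 2 := by positivity
    nlinarith
  · have h1 : 0 < s ^ 2 * (4 * N * d - c ^ 2) := by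
      have : 0 < s ^ 2 := by positivity
      nlinarith
    nlinarith [sq_nonneg (2 * N * t + s * c)]

lemma Pspan_param {c d c' d' : ℝ} (h : Pspan c d = Pspan c' d') : c = c' ∧ d = d' := by
  have h1 : ((0:ℝ), (1:ℝ), d) ∈ Pspan c' d' := by
    rw [← h]; exact Submodule.subset_span (by simp)
  have h2 : ((1:ℝ), (0:ℝ), c) ∈ Pspan c' d' := by
    rw [← h]; exact Submodule.subset_span (by simp)
  obtain ⟨s, t, h1⟩ := mem_Pspan.mp h1
  obtain ⟨s', t', h2⟩ := mem_Pspan.mp h2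
  simp [Prod.ext_iff] at h1 h2
  obtain ⟨rfl, rfl, h1⟩ := h1
  obtain ⟨rfl, rfl, h2⟩ := h2
  constructor <;> linarith

lemma Wspan_eq_span (N : ℕ) (τ : ℍ) :
    Wspan N τ = Submodule.span ℝ
      {(τ.re / Real.sqrt N, (1:ℝ), τ.im ^ 2 - τ.re ^ 2),
       (τ.im / Real.sqrt N, (0:ℝ), -(2 * τ.re * τ.im))} := by
  have h1 : (((wvec N τ).1.re, (wvec N τ).2.1.re, (wvec N τ).2.2.re) : ℝ × ℝ × ℝ)
      = (τ.re / Real.sqrt N, 1, τ.im ^ 2 - τ.re ^ 2) := by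
    simp [wvec, Complex.div_ofReal_re, pow_two, Complex.mul_re,
      UpperHalfPlane.coe_re, UpperHalfPlane.coe_im, Prod.ext_iff]
    all_goals ring
  have h2 : (((wvec N τ).1.im, (wvec N τ).2.1.im, (wvec N τ).2.2.im) : ℝ × ℝ × ℝ)
      = (τ.im / Real.sqrt N, 0, -(2 * τ.re * τ.im)) := by
    simp [wvec, Complex.div_ofReal_im, pow_two, Complex.mul_im,
      UpperHalfPlane.coe_re, UpperHalfPlane.coe_im, Prod.ext_iff]
    all_goals ring
  rw [Wspan, h1, h2]

lemma span_eq_P (x y s : ℝ) (hy0 : y ≠ 0) (hs0 : s ≠ 0) :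
    Submodule.span ℝ {(x / s, (1:ℝ), y ^ 2 - x ^ 2), (y / s, (0:ℝ), -(2 * x * y))}
      = Pspan (-(2 * s * x)) (x ^ 2 + y ^ 2) := by
  apply le_antisymm
  · rw [Submodule.span_le]
    rintro v hv
    rcases hv with rfl | rfl
    · rw [SetLike.mem_coe, Pspan, Submodule.mem_span_pair]
      refine ⟨1, x / s, ?_⟩
      simp only [Prod.smul_mk, Prod.mk_add_mk, smul_eq_mul, Prod.mk.injEq]
      refine ⟨by field_simp <;> ring, by norm_num, by field_simp <;> ring⟩
    · rw [SetLike.mem_coe, Pspan, Submodule.mem_span_pair]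
      refine ⟨0, y / s, ?_⟩
      simp only [Prod.smul_mk, Prod.mk_add_mk, smul_eq_mul, Prod.mk.injEq]
      refine ⟨by field_simp <;> ring, by norm_num, by field_simp <;> ring⟩
  · rw [Pspan, Submodule.span_le]
    rintro v hv
    rcases hv with rfl | rfl
    · rw [SetLike.mem_coe, Submodule.mem_span_pair]
      refine ⟨1, -(x / y), ?_⟩
      simp only [Prod.smul_mk, Prod.mk_add_mk, smul_eq_mul, Prod.mk.injEq]
      refine ⟨by field_simp <;> ring, by norm_num, by field_simp <;> ring⟩
    · rw [SetLike.mem_coe, Submodule.mem_span_pair]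
      refine ⟨0, s / y, ?_⟩
      simp only [Prod.smul_mk, Prod.mk_add_mk, smul_eq_mul, Prod.mk.injEq]
      refine ⟨by field_simp <;> ring, by norm_num, by field_simp <;> ring⟩

lemma W_eq_P {N : ℕ} (hN : 0 < N) (τ : ℍ) :
    Wspan N τ = Pspan (-(2 * Real.sqrt N * τ.re)) (τ.re ^ 2 + τ.im ^ 2) := by
  have hNR : (0:ℝ) < N := by exact_mod_cast hN
  have hs0 : Real.sqrt N ≠ 0 := ne_of_gt (Real.sqrt_pos.mpr hNR)
  rw [Wspan_eq_span]
  exact span_eq_P τ.re τ.im (Real.sqrt N) (ne_of_gt τ.2) hs0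

lemma exists_P {N : ℕ} (hN : 0 < N) (V : Submodule ℝ (ℝ × ℝ × ℝ))
    (h2 : Module.finrank ℝ V = 2)
    (hpos : ∀ v ∈ V, v ≠ 0 → 0 < qform N v) :
    ∃ c d : ℝ, c ^ 2 < 4 * N * d ∧ V = Pspan c d := by
  have hNR : (0:ℝ) < N := by exact_mod_cast hN
  -- any linear functional has a nonzero kernel vector in V
  have key : ∀ f : (ℝ × ℝ × ℝ) →ₗ[ℝ] ℝ, ∃ v ∈ V, v ≠ 0 ∧ f v = 0 := by
    intro f
    have hni : ¬ Function.Injective (f.comp V.subtype) := by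
      intro hinj
      have := LinearMap.finrank_le_finrank_of_injective hinj
      rw [h2, Module.finrank_self] at this
      omega
    rw [← LinearMap.ker_eq_bot] at hni
    obtain ⟨w, hwk, hw0⟩ := Submodule.exists_mem_ne_zero_of_ne_bot hni
    refine ⟨(w : ℝ × ℝ × ℝ), w.2, ?_, ?_⟩
    · exact fun hh => hw0 (Subtype.ext hh)
    · simpa [LinearMap.mem_ker] using hwk
  -- a vector b with second coordinate 0
  obtain ⟨b, hbV, hb0, hb2⟩ :=
    key ((LinearMap.fst ℝ ℝ ℝ).comp (LinearMap.snd ℝ ℝ (ℝ × ℝ)))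
  simp only [LinearMap.comp_apply, LinearMap.snd_apply, LinearMap.fst_apply] at hb2
  have hqb := hpos b hbV hb0
  have hb1 : b.1 ≠ 0 := by
    intro h
    simp only [qform, h, hb2] at hqb
    norm_num at hqb
  -- a vector a with second coordinate 1
  have hA : ∃ a ∈ V, a.2.1 = 1 := by
    by_cases hA0 : ∃ a ∈ V, a.2.1 ≠ 0
    · obtain ⟨a0, ha0V, ha0⟩ := hA0
      refine ⟨(a0.2.1)⁻¹ • a0, V.smul_mem _ ha0V, ?_⟩
      simp only [Prod.smul_snd, Prod.smul_fst, smul_eq_mul]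
      exact inv_mul_cancel₀ ha0
    · push_neg at hA0
      obtain ⟨z, hzV, hz0, hz1⟩ := key (LinearMap.fst ℝ ℝ (ℝ × ℝ))
      simp only [LinearMap.fst_apply] at hz1
      have hz2 := hA0 z hzV
      have := hpos z hzV hz0
      simp only [qform, hz1, hz2] at this
      norm_num at this
  obtain ⟨a, haV, ha2⟩ := hA
  set c : ℝ := b.2.2 / b.1 with hc
  set d : ℝ := a.2.2 - a.1 * c with hd
  have huB : ((1:ℝ), (0:ℝ), c) ∈ V := by
    have hmem : (b.1)⁻¹ • b ∈ V := V.smul_mem _ hbV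
    have heq : (b.1)⁻¹ • b = ((1:ℝ), (0:ℝ), c) := by
      rw [Prod.ext_iff, Prod.ext_iff]
      simp only [Prod.smul_fst, Prod.smul_snd, smul_eq_mul]
      refine ⟨inv_mul_cancel₀ hb1, by simp [hb2], ?_⟩
      rw [hc]; field_simp
    rwa [heq] at hmem
  have huA : ((0:ℝ), (1:ℝ), d) ∈ V := by
    have hmem : a + (-a.1) • ((1:ℝ), (0:ℝ), c) ∈ V := V.add_mem haV (V.smul_mem _ huB)
    have heq : a + (-a.1) • ((1:ℝ), (0:ℝ), c) = ((0:ℝ), (1:ℝ), d) := by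
      rw [Prod.ext_iff, Prod.ext_iff]
      simp only [Prod.smul_mk, Prod.fst_add, Prod.snd_add, Prod.smul_fst, Prod.smul_snd,
        smul_eq_mul]
      refine ⟨by ring, by simp [ha2], ?_⟩
      rw [hd]; ring
    rwa [heq] at hmem
  have hle : Pspan c d ≤ V := by
    rw [Pspan, Submodule.span_le]
    rintro v hv
    rcases hv with rfl | rfl
    · exact huA
    · exact huB
  have hVeq : Pspan c d = V :=
    Submodule.eq_of_le_of_finrank_le hle (by rw [h2, Pspan_rank])
  -- positivity gives the discriminant condition
  have hv0 : ((-c, 2 * (N:ℝ), 2 * N * d - c ^ 2) : ℝ × ℝ × ℝ) ∈ V := by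
    have hmem : (2 * (N:ℝ)) • ((0:ℝ), (1:ℝ), d) + (-c) • ((1:ℝ), (0:ℝ), c) ∈ V :=
      V.add_mem (V.smul_mem _ huA) (V.smul_mem _ huB)
    have heq : (2 * (N:ℝ)) • ((0:ℝ), (1:ℝ), d) + (-c) • ((1:ℝ), (0:ℝ), c)
        = ((-c, 2 * (N:ℝ), 2 * N * d - c ^ 2) : ℝ × ℝ × ℝ) := by
      simp only [Prod.smul_mk, Prod.mk_add_mk, smul_eq_mul, Prod.mk.injEq]
      refine ⟨by ring, by ring, by ring⟩
    rwa [heq] at hmem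
  have hne : ((-c, 2 * (N:ℝ), 2 * N * d - c ^ 2) : ℝ × ℝ × ℝ) ≠ 0 := by
    intro h
    have h' := congrArg (fun p : ℝ × ℝ × ℝ => p.2.1) h
    simp at h'
    omega
  have hq := hpos _ hv0 hne
  simp only [qform] at hq
  refine ⟨c, d, by nlinarith, hVeq.symm⟩

/-- For each `τ ∈ ℍ` the subspace `W(τ)` is a 2-dimensional subspace of `ℝ³` on which
`q` is positive definite, and `τ ↦ W(τ)` is a bijection from `ℍ` onto the Grassmannian
of all 2-dimensional subspaces of `ℝ³` on which `q` is positive definite. -/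
theorem stmt0 (N : ℕ) (hN : 0 < N) :
    (∀ τ : ℍ, Module.finrank ℝ (Wspan N τ) = 2 ∧
      ∀ v ∈ Wspan N τ, v ≠ 0 → 0 < qform N v) ∧
    Set.BijOn (Wspan N) Set.univ
      {V : Submodule ℝ (ℝ × ℝ × ℝ) |
        Module.finrank ℝ V = 2 ∧ ∀ v ∈ V, v ≠ 0 → 0 < qform N v} := by
  have hNR : (0:ℝ) < N := by exact_mod_cast hN
  have hs : (0:ℝ) < Real.sqrt N := Real.sqrt_pos.mpr hNR
  have hs0 : Real.sqrt N ≠ 0 := ne_of_gt hs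
  have hsq : Real.sqrt N * Real.sqrt N = N := Real.mul_self_sqrt hNR.le
  have main : ∀ τ : ℍ, Module.finrank ℝ (Wspan N τ) = 2 ∧
      ∀ v ∈ Wspan N τ, v ≠ 0 → 0 < qform N v := by
    intro τ
    have hy : 0 < τ.im := τ.2
    rw [W_eq_P hN]
    refine ⟨Pspan_rank _ _, Pspan_pos hN ?_⟩
    have hsq2 : (-(2 * Real.sqrt N * τ.re)) ^ 2 = 4 * N * τ.re ^ 2 := by
      rw [show (-(2 * Real.sqrt N * τ.re)) ^ 2
          = (Real.sqrt N * Real.sqrt N) * (4 * τ.re ^ 2) from by ring, hsq]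
      ring
    rw [hsq2]
    nlinarith [mul_pos hNR (mul_pos hy hy)]
  refine ⟨main, fun τ _ => main τ, ?_, ?_⟩
  · -- injective
    intro τ _ τ' _ h
    rw [W_eq_P hN, W_eq_P hN] at h
    obtain ⟨hcc, hdd⟩ := Pspan_param h
    have hy : 0 < τ.im := τ.2
    have hy' : 0 < τ'.im := τ'.2
    have hre : τ.re = τ'.re :=
      mul_left_cancel₀ (by positivity : (2 * Real.sqrt N) ≠ 0) (neg_inj.mp hcc)
    have him : τ.im = τ'.im := by
      have h1 : (τ.im - τ'.im) * (τ.im + τ'.im) = 0 := by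
        linear_combination hdd - (τ.re + τ'.re) * hre
      rcases mul_eq_zero.mp h1 with h | h
      · linarith
      · linarith
    exact UpperHalfPlane.ext_re_im hre him
  · -- surjective
    intro V hV
    obtain ⟨hV2, hVpos⟩ := hV
    obtain ⟨c, d, hcd, rfl⟩ := exists_P hN V hV2 hVpos
    have hyy : 0 < d - c ^ 2 / (4 * N) := by
      rw [sub_pos, div_lt_iff₀ (by positivity)]
      nlinarith
    set y : ℝ := Real.sqrt (d - c ^ 2 / (4 * N)) with hy
    have hy0 : 0 < y := Real.sqrt_pos.mpr hyy
    have hy2 : y ^ 2 = d - c ^ 2 / (4 * N) := Real.sq_sqrt hyy.le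
    set x : ℝ := -(c / (2 * Real.sqrt N)) with hx
    refine ⟨⟨⟨x, y⟩, hy0⟩, Set.mem_univ _, ?_⟩
    set τ : ℍ := (⟨⟨x, y⟩, hy0⟩ : ℍ)
    have hτre : τ.re = x := rfl
    have hτim : τ.im = y := rfl
    rw [W_eq_P hN, hτre, hτim]
    have h4N : (2 * Real.sqrt N) ^ 2 = 4 * N := by
      rw [show (2 * Real.sqrt N) ^ 2 = (Real.sqrt N * Real.sqrt N) * 4 from by ring, hsq]
      ring
    have e1 : -(2 * Real.sqrt N * x) = c := by
      rw [hx]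
      field_simp
    have e2 : x ^ 2 + y ^ 2 = d := by
      have hx2 : x ^ 2 = c ^ 2 / (4 * N) := by
        rw [hx, neg_sq, div_pow, h4N]
      rw [hx2, hy2]
      ring
    rw [e1, e2]
end

section
/- Let λ be a nonzero real number, n a positive integer, and c : (0,∞) → ℂ a measurable function that is bounded on (0,1] and satisfies ∫₁^∞ |c(y)| y^{−5/2} dy < ∞. For v > 0 set I(v) = v·∫₀^∞ c(y) · exp(−π n² v²/(2y) − π λ² y) · y^{−5/2} dy. Then the integral converges absolutely for every v > 0, and I(v) decreases rapidly as v → ∞: there exist constants C > 0 and ε > 0 such that |I(v)| ≤ C·e^{−ε v} for all v ≥ 1. -/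
open MeasureTheory Real

-- exp(-x) ≤ 27 / x^3 for x > 0
lemma exp_neg_le (x : ℝ) (hx : 0 < x) : Real.exp (-x) ≤ 27 / x ^ 3 := by
  have h3 : x / 3 ≤ Real.exp (x / 3) := le_trans (by linarith) (Real.add_one_le_exp _)
  have hp : (x / 3) ^ 3 ≤ Real.exp (x / 3) ^ 3 := pow_le_pow_left₀ (by positivity) h3 3
  have hexpx : x ^ 3 / 27 ≤ Real.exp x := by
    have : Real.exp x = Real.exp (x / 3) ^ 3 := by
      rw [← Real.exp_nat_mul]; congr 1; push_cast; ring
    rw [this]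
    calc x ^ 3 / 27 = (x / 3) ^ 3 := by ring
      _ ≤ _ := hp
  have hpos : (0:ℝ) < x ^ 3 / 27 := by positivity
  rw [Real.exp_neg]
  calc (Real.exp x)⁻¹ ≤ (x ^ 3 / 27)⁻¹ := inv_anti₀ hpos hexpx
    _ = 27 / x ^ 3 := by field_simp

lemma helperR (c : ℝ → ℂ) (hmeas : Measurable c) (M : ℝ)
    (hbd : ∀ y ∈ Set.Ioc (0:ℝ) 1, ‖c y‖ ≤ M)
    (hint : IntegrableOn (fun y : ℝ => ‖c y‖ * y ^ (-(5 : ℝ) / 2)) (Set.Ici (1 : ℝ)))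
    (a b : ℝ) (ha : 0 < a) (hb : 0 ≤ b) :
    IntegrableOn (fun y => ‖c y‖ * (Real.exp (-a / y - b * y) * y ^ (-(5:ℝ)/2)))
      (Set.Ioi (0:ℝ)) := by
  have hM0 : 0 ≤ M := le_trans (norm_nonneg _) (hbd 1 ⟨zero_lt_one, le_refl 1⟩)
  have hmeasf : Measurable (fun y : ℝ => ‖c y‖ * (Real.exp (-a / y - b * y) * y ^ (-(5:ℝ)/2))) := by
    fun_prop
  rw [show Set.Ioi (0:ℝ) = Set.Ioc 0 1 ∪ Set.Ioi 1 from (Set.Ioc_union_Ioi_eq_Ioi zero_le_one).symm]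
  apply IntegrableOn.union
  · apply Integrable.mono' (g := fun _ : ℝ => M * (27 / a ^ 3))
      (integrableOn_const measure_Ioc_lt_top.ne)
      hmeasf.aestronglyMeasurable.restrict
    filter_upwards [ae_restrict_mem measurableSet_Ioc] with y hy
    obtain ⟨hy0, hy1⟩ := hy
    have hrp : (0:ℝ) < y ^ (-(5:ℝ)/2) := Real.rpow_pos_of_pos hy0 _
    have he1 : Real.exp (-a / y - b * y) ≤ Real.exp (-(a / y)) := by
      apply Real.exp_le_exp.mpr; have : 0 ≤ b * y := mul_nonneg hb hy0.le; linarith [neg_div y a, this]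
    have he2 : Real.exp (-(a / y)) ≤ 27 / (a / y) ^ 3 := exp_neg_le _ (by positivity)
    have he3 : (27 : ℝ) / (a / y) ^ 3 = 27 / a ^ 3 * y ^ (3:ℝ) := by
      rw [show (3:ℝ) = ((3:ℕ):ℝ) by norm_num, Real.rpow_natCast]; field_simp
    have hy3 : y ^ (3:ℝ) * y ^ (-(5:ℝ)/2) = y ^ ((1:ℝ)/2) := by
      rw [← Real.rpow_add hy0]; norm_num
    have hy12 : y ^ ((1:ℝ)/2) ≤ 1 := Real.rpow_le_one hy0.le hy1 (by norm_num)
    have hE : Real.exp (-a / y - b * y) * y ^ (-(5:ℝ)/2) ≤ 27 / a ^ 3 := by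
      calc Real.exp (-a / y - b * y) * y ^ (-(5:ℝ)/2)
          ≤ (27 / a ^ 3 * y ^ (3:ℝ)) * y ^ (-(5:ℝ)/2) := by
            apply mul_le_mul_of_nonneg_right _ hrp.le
            calc Real.exp (-a / y - b * y) ≤ 27 / (a/y)^3 := le_trans he1 he2
              _ = _ := he3
        _ = 27 / a ^ 3 * y ^ ((1:ℝ)/2) := by rw [mul_assoc, hy3]
        _ ≤ 27 / a ^ 3 * 1 := by
            apply mul_le_mul_of_nonneg_left hy12 (by positivity)
        _ = 27 / a ^ 3 := mul_one _
    have hnn : 0 ≤ Real.exp (-a / y - b * y) * y ^ (-(5:ℝ)/2) := by positivity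
    rw [Real.norm_eq_abs, abs_of_nonneg (mul_nonneg (norm_nonneg _) hnn)]
    exact mul_le_mul (hbd y ⟨hy0, hy1⟩) hE hnn hM0
  · apply Integrable.mono' (g := fun y : ℝ => ‖c y‖ * y ^ (-(5:ℝ)/2))
      (hint.mono_set Set.Ioi_subset_Ici_self)
      hmeasf.aestronglyMeasurable.restrict
    filter_upwards [ae_restrict_mem measurableSet_Ioi] with y hy
    have hy0 : (0:ℝ) < y := lt_trans zero_lt_one hy
    have hrp : (0:ℝ) ≤ y ^ (-(5:ℝ)/2) := (Real.rpow_pos_of_pos hy0 _).le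
    have he : Real.exp (-a / y - b * y) ≤ 1 := by
      rw [Real.exp_le_one_iff]
      have : 0 ≤ a / y := by positivity
      have : 0 ≤ b * y := mul_nonneg hb hy0.le
      have := neg_div y a
      linarith [div_nonneg ha.le hy0.le]
    have hnn : 0 ≤ Real.exp (-a / y - b * y) * y ^ (-(5:ℝ)/2) := by positivity
    rw [Real.norm_eq_abs, abs_of_nonneg (mul_nonneg (norm_nonneg _) hnn)]
    calc ‖c y‖ * (Real.exp (-a / y - b * y) * y ^ (-(5:ℝ)/2))
        ≤ ‖c y‖ * (1 * y ^ (-(5:ℝ)/2)) := by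
          apply mul_le_mul_of_nonneg_left _ (norm_nonneg _)
          exact mul_le_mul_of_nonneg_right he hrp
      _ = ‖c y‖ * y ^ (-(5:ℝ)/2) := by ring

lemma helperC (c : ℝ → ℂ) (hmeas : Measurable c) (M : ℝ)
    (hbd : ∀ y ∈ Set.Ioc (0:ℝ) 1, ‖c y‖ ≤ M)
    (hint : IntegrableOn (fun y : ℝ => ‖c y‖ * y ^ (-(5 : ℝ) / 2)) (Set.Ici (1 : ℝ)))
    (a b : ℝ) (ha : 0 < a) (hb : 0 ≤ b) :
    IntegrableOn (fun y => c y * ((Real.exp (-a / y - b * y) * y ^ (-(5:ℝ)/2) : ℝ) : ℂ))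
      (Set.Ioi (0:ℝ)) := by
  apply Integrable.mono' (helperR c hmeas M hbd hint a b ha hb)
  · apply Measurable.aestronglyMeasurable
    fun_prop
  · filter_upwards [ae_restrict_mem measurableSet_Ioi] with y hy
    have hy0 : (0:ℝ) < y := hy
    have hnn : 0 ≤ Real.exp (-a / y - b * y) * y ^ (-(5:ℝ)/2) := by
      positivity
    rw [norm_mul, Complex.norm_real, Real.norm_eq_abs, abs_of_nonneg hnn]

/-- Let `λ ≠ 0` be real, `n` a positive integer, and `c : (0,∞) → ℂ` measurable,
bounded on `(0,1]` and with `∫₁^∞ ‖c(y)‖ y^(−5/2) dy < ∞`.  Then for every `v > 0` the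
integral `I(v) = v·∫₀^∞ c(y)·exp(−πn²v²/(2y) − πλ²y)·y^(−5/2) dy` converges absolutely,
and `I(v)` decreases rapidly (exponentially) as `v → ∞`. -/
theorem stmt3 (lam : ℝ) (hlam : lam ≠ 0) (n : ℕ) (hn : 0 < n)
    (c : ℝ → ℂ) (hmeas : Measurable c)
    (hbd : ∃ M : ℝ, ∀ y ∈ Set.Ioc (0 : ℝ) 1, ‖c y‖ ≤ M)
    (hint : IntegrableOn (fun y : ℝ => ‖c y‖ * y ^ (-(5 : ℝ) / 2)) (Set.Ici (1 : ℝ))) :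
    (∀ v : ℝ, 0 < v →
      IntegrableOn
        (fun y : ℝ => c y *
          ((Real.exp (-(π * n ^ 2 * v ^ 2) / (2 * y) - π * lam ^ 2 * y) *
            y ^ (-(5 : ℝ) / 2) : ℝ) : ℂ))
        (Set.Ioi (0 : ℝ))) ∧
    ∃ C : ℝ, 0 < C ∧ ∃ ε : ℝ, 0 < ε ∧ ∀ v : ℝ, 1 ≤ v →
      ‖(v : ℂ) * ∫ y in Set.Ioi (0 : ℝ), c y *
          ((Real.exp (-(π * n ^ 2 * v ^ 2) / (2 * y) - π * lam ^ 2 * y) *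
            y ^ (-(5 : ℝ) / 2) : ℝ) : ℂ)‖ ≤ C * Real.exp (-ε * v) := by
  obtain ⟨M, hbd⟩ := hbd
  have hn' : (0:ℝ) < (n:ℝ) := by exact_mod_cast hn
  have habs : 0 < |lam| := abs_pos.mpr hlam
  -- Part 1: integrability for each v > 0
  have hpart1 : ∀ v : ℝ, 0 < v →
      IntegrableOn
        (fun y : ℝ => c y *
          ((Real.exp (-(π * n ^ 2 * v ^ 2) / (2 * y) - π * lam ^ 2 * y) *
            y ^ (-(5 : ℝ) / 2) : ℝ) : ℂ))
        (Set.Ioi (0 : ℝ)) := by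
    intro v hv
    have key := helperC c hmeas M hbd hint (π * (n:ℝ)^2 * v^2 / 2) (π * lam^2)
      (by positivity) (by positivity)
    have heq : (fun y : ℝ => c y *
        ((Real.exp (-(π * n ^ 2 * v ^ 2) / (2 * y) - π * lam ^ 2 * y) *
          y ^ (-(5 : ℝ) / 2) : ℝ) : ℂ)) =
        (fun y : ℝ => c y *
        ((Real.exp (-(π * (n:ℝ)^2 * v^2 / 2) / y - (π * lam^2) * y) *
          y ^ (-(5 : ℝ) / 2) : ℝ) : ℂ)) := by
      funext y
      have : -(π * (n:ℝ) ^ 2 * v ^ 2) / (2 * y) - π * lam ^ 2 * y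
          = -(π * (n:ℝ)^2 * v^2 / 2) / y - (π * lam^2) * y := by ring
      rw [this]
    rw [heq]
    exact key
  refine ⟨hpart1, ?_⟩
  set B : ℝ := Real.sqrt 2 * π * n * |lam| with hBdef
  have hB : 0 < B := by positivity
  set h : ℝ → ℝ := fun y => ‖c y‖ *
    (Real.exp (-(π * (n:ℝ)^2 / 4) / y - (π * lam^2 / 2) * y) * y ^ (-(5:ℝ)/2)) with hhdef
  have hh : IntegrableOn h (Set.Ioi (0:ℝ)) :=
    helperR c hmeas M hbd hint (π * (n:ℝ)^2 / 4) (π * lam^2 / 2) (by positivity) (by positivity)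
  set K : ℝ := ∫ y in Set.Ioi (0:ℝ), h y with hKdef
  have hK0 : 0 ≤ K := by
    apply setIntegral_nonneg measurableSet_Ioi
    intro y hy
    exact mul_nonneg (norm_nonneg _)
      (mul_nonneg (Real.exp_pos _).le (Real.rpow_nonneg (le_of_lt hy) _))
  refine ⟨4 / B * K + 1, by positivity, B / 4, by positivity, ?_⟩
  intro v hv
  have hv0 : (0:ℝ) < v := lt_of_lt_of_le zero_lt_one hv
  have hf := hpart1 v hv0
  -- pointwise bound
  have hpt : ∀ y ∈ Set.Ioi (0:ℝ),
      ‖c y * ((Real.exp (-(π * n ^ 2 * v ^ 2) / (2 * y) - π * lam ^ 2 * y) *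
          y ^ (-(5 : ℝ) / 2) : ℝ) : ℂ)‖ ≤ Real.exp (-(B/2) * v) * h y := by
    intro y hy
    have hy0 : (0:ℝ) < y := hy
    have hyinv : (0:ℝ) ≤ 1 / y := by positivity
    have hsq : 0 ≤ (n:ℝ)^2*v^2 - 2*Real.sqrt 2*(n:ℝ)*v* |lam| *y + 2*lam^2*y^2 := by
      have h2 : Real.sqrt 2 ^ 2 = 2 := Real.sq_sqrt (by norm_num)
      have hl : |lam|^2 = lam^2 := sq_abs lam
      calc (0:ℝ) ≤ ((n:ℝ)*v - Real.sqrt 2* |lam| *y)^2 := sq_nonneg _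
        _ = (n:ℝ)^2*v^2 - 2*Real.sqrt 2*(n:ℝ)*v* |lam| *y + (Real.sqrt 2)^2* |lam|^2*y^2 := by ring
        _ = (n:ℝ)^2*v^2 - 2*Real.sqrt 2*(n:ℝ)*v* |lam| *y + 2*lam^2*y^2 := by rw [h2, hl]
    have hv2 : (1:ℝ) ≤ v^2 := by nlinarith
    have hyne : y ≠ 0 := ne_of_gt hy0
    have hE : -(π * (n:ℝ) ^ 2 * v ^ 2) / (2 * y) - π * lam ^ 2 * y
        ≤ -(B/2) * v + (-(π * (n:ℝ)^2 / 4) / y - (π * lam^2 / 2) * y) := by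
      have hN : 0 ≤ π*(n:ℝ)^2*v^2/2 - π*(n:ℝ)^2/4 - (B/2)*v*y + (π*lam^2/2)*y^2 := by
        rw [hBdef]
        nlinarith [hsq, Real.pi_pos, hv2, (show (0:ℝ) ≤ π*(n:ℝ)^2 by positivity)]
      have hNy : 0 ≤ (π*(n:ℝ)^2*v^2/2 - π*(n:ℝ)^2/4 - (B/2)*v*y + (π*lam^2/2)*y^2)/y :=
        div_nonneg hN hy0.le
      have eqn : (π*(n:ℝ)^2*v^2/2 - π*(n:ℝ)^2/4 - (B/2)*v*y + (π*lam^2/2)*y^2)/y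
          = (-(B/2) * v + (-(π * (n:ℝ)^2 / 4) / y - (π * lam^2 / 2) * y))
            - (-(π * (n:ℝ) ^ 2 * v ^ 2) / (2 * y) - π * lam ^ 2 * y) := by
        field_simp
        ring
      linarith [hNy, eqn]
    have hexp : Real.exp (-(π * (n:ℝ) ^ 2 * v ^ 2) / (2 * y) - π * lam ^ 2 * y)
        ≤ Real.exp (-(B/2) * v) * Real.exp (-(π * (n:ℝ)^2 / 4) / y - (π * lam^2 / 2) * y) := by
      rw [← Real.exp_add]
      exact Real.exp_le_exp.mpr hE
    have hrp : (0:ℝ) ≤ y ^ (-(5:ℝ)/2) := Real.rpow_nonneg hy0.le _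
    have hnn : 0 ≤ Real.exp (-(π * (n:ℝ) ^ 2 * v ^ 2) / (2 * y) - π * lam ^ 2 * y) *
        y ^ (-(5:ℝ)/2) := mul_nonneg (Real.exp_pos _).le hrp
    rw [norm_mul, Complex.norm_real, Real.norm_eq_abs, abs_of_nonneg hnn]
    calc ‖c y‖ * (Real.exp (-(π * (n:ℝ) ^ 2 * v ^ 2) / (2 * y) - π * lam ^ 2 * y) *
          y ^ (-(5:ℝ)/2))
        ≤ ‖c y‖ * ((Real.exp (-(B/2) * v) *
            Real.exp (-(π * (n:ℝ)^2 / 4) / y - (π * lam^2 / 2) * y)) * y ^ (-(5:ℝ)/2)) := by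
          apply mul_le_mul_of_nonneg_left _ (norm_nonneg _)
          exact mul_le_mul_of_nonneg_right hexp hrp
      _ = Real.exp (-(B/2) * v) * h y := by rw [hhdef]; ring
  have hbound : ‖∫ y in Set.Ioi (0:ℝ), c y *
      ((Real.exp (-(π * n ^ 2 * v ^ 2) / (2 * y) - π * lam ^ 2 * y) *
        y ^ (-(5 : ℝ) / 2) : ℝ) : ℂ)‖ ≤ Real.exp (-(B/2) * v) * K := by
    calc ‖∫ y in Set.Ioi (0:ℝ), c y *
        ((Real.exp (-(π * n ^ 2 * v ^ 2) / (2 * y) - π * lam ^ 2 * y) *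
          y ^ (-(5 : ℝ) / 2) : ℝ) : ℂ)‖
        ≤ ∫ y in Set.Ioi (0:ℝ), ‖c y *
          ((Real.exp (-(π * n ^ 2 * v ^ 2) / (2 * y) - π * lam ^ 2 * y) *
            y ^ (-(5 : ℝ) / 2) : ℝ) : ℂ)‖ := norm_integral_le_integral_norm _
      _ ≤ ∫ y in Set.Ioi (0:ℝ), Real.exp (-(B/2) * v) * h y :=
          setIntegral_mono_on hf.norm (hh.const_mul _) measurableSet_Ioi hpt
      _ = Real.exp (-(B/2) * v) * K := by rw [integral_const_mul]
  have hvle : v ≤ 4 / B * Real.exp (B/4 * v) := by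
    have h1 : B/4 * v ≤ Real.exp (B/4 * v) := by
      linarith [Real.add_one_le_exp (B/4 * v)]
    have hBne : B ≠ 0 := ne_of_gt hB
    calc v = 4/B * (B/4 * v) := by field_simp
      _ ≤ 4/B * Real.exp (B/4 * v) := mul_le_mul_of_nonneg_left h1 (by positivity)
  have hnormv : ‖(v:ℂ)‖ = v := by
    rw [Complex.norm_real, Real.norm_eq_abs, abs_of_pos hv0]
  rw [norm_mul, hnormv]
  calc v * ‖∫ y in Set.Ioi (0:ℝ), c y *
        ((Real.exp (-(π * n ^ 2 * v ^ 2) / (2 * y) - π * lam ^ 2 * y) *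
          y ^ (-(5 : ℝ) / 2) : ℝ) : ℂ)‖
      ≤ v * (Real.exp (-(B/2) * v) * K) := mul_le_mul_of_nonneg_left hbound hv0.le
    _ ≤ (4 / B * Real.exp (B/4 * v)) * (Real.exp (-(B/2) * v) * K) := by
        apply mul_le_mul_of_nonneg_right hvle
        exact mul_nonneg (Real.exp_pos _).le hK0
    _ = 4 / B * K * (Real.exp (B/4 * v) * Real.exp (-(B/2) * v)) := by ring
    _ = 4 / B * K * Real.exp (-(B/4) * v) := by
        rw [← Real.exp_add]; congr 1; ring
    _ ≤ (4 / B * K + 1) * Real.exp (-(B/4) * v) := by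
        nlinarith [Real.exp_pos (-(B/4) * v)]
end

section
/- Let L be a lattice. A vector v ∈ L* is primitive if ℚv ∩ L* = ℤv. Suppose v ∈ L* is primitive, (v,v) < 0, and the reflection σ_v : x ↦ x − 2((v,x)/(v,v))·v maps L into L (i.e., v is a primitive root of L). Then there is a positive integer m such that (v,v) = −2/m and m·v ∈ L. -/
/-- The rational bilinear form on `ℚⁿ` associated to an integral Gram matrix `G`. -/
noncomputable def latBF {n : ℕ} (G : Matrix (Fin n) (Fin n) ℤ) (x y : Fin n → ℚ) : ℚ :=
  dotProduct x ((G.map (Int.cast : ℤ → ℚ)).mulVec y)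

/-- The lattice `L = ℤⁿ` sitting inside `L ⊗ ℚ = ℚⁿ`. -/
def latL (n : ℕ) : Set (Fin n → ℚ) :=
  Set.range (fun m : Fin n → ℤ => fun i => (m i : ℚ))

/-- The dual lattice `L* = {x ∈ L ⊗ ℚ : (x, y) ∈ ℤ for all y ∈ L}`. -/
def latDual {n : ℕ} (G : Matrix (Fin n) (Fin n) ℤ) : Set (Fin n → ℚ) :=
  {x | ∀ m : Fin n → ℤ, ∃ k : ℤ, latBF G x (fun i => (m i : ℚ)) = k}

lemma latL_subset_latDual {n : ℕ} (G : Matrix (Fin n) (Fin n) ℤ) :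
    latL n ⊆ latDual G := by
  rintro x ⟨m, rfl⟩ m'
  refine ⟨dotProduct m (G.mulVec m'), ?_⟩
  simp [latBF, dotProduct, Matrix.mulVec, Matrix.map_apply]


/-- A primitive root `v` of a lattice (a primitive vector of `L*` of negative norm whose
reflection preserves `L`) has norm `−2/m` for some positive integer `m` with `m·v ∈ L`. -/
theorem stmt5 {n : ℕ} (G : Matrix (Fin n) (Fin n) ℤ) (hsym : G.IsSymm) (hdet : G.det ≠ 0)
    (v : Fin n → ℚ) (hv : v ∈ latDual G)
    (hprim : ∀ t : ℚ, t • v ∈ latDual G → ∃ k : ℤ, t • v = (k : ℚ) • v)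
    (hneg : latBF G v v < 0)
    (hrefl : ∀ x ∈ latL n, x - (2 * latBF G v x / latBF G v v) • v ∈ latL n) :
    ∃ m : ℤ, 0 < m ∧ latBF G v v = -2 / (m : ℚ) ∧ (m : ℚ) • v ∈ latL n := by
  classical
  set a := latBF G v v with ha
  have ha0 : a ≠ 0 := ne_of_lt hneg
  set w := Matrix.vecMul v (G.map (Int.cast : ℤ → ℚ)) with hw
  have hlin : ∀ y, latBF G v y = dotProduct w y := fun y =>
    Matrix.dotProduct_mulVec v _ y
  have hvne : v ≠ 0 := by
    rintro rfl
    rw [ha, latBF] at hneg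
    simp at hneg
  -- the scalar factor extraction
  have hsmul : ∀ (t : ℚ) y, latBF G (t • v) y = t * latBF G v y := by
    intro t y
    simp [latBF, smul_dotProduct, smul_eq_mul]
  -- scalar cancellation from primitivity
  have hscal : ∀ t : ℚ, t • v ∈ latDual G → ∃ k : ℤ, t = (k : ℚ) := by
    intro t ht
    obtain ⟨k, hk⟩ := hprim t ht
    refine ⟨k, ?_⟩
    have : (t - (k : ℚ)) • v = 0 := by rw [sub_smul, hk, sub_self]
    rcases smul_eq_zero.mp this with h | h
    · linarith [sub_eq_zero.mp (by linarith [h] : t - (k:ℚ) = 0)]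
    · exact absurd h hvne
  -- the subgroup of values of (v, ·) on L
  let H : AddSubgroup ℤ :=
    { carrier := {k : ℤ | ∃ m : Fin n → ℤ,
        dotProduct w (fun i => (m i : ℚ)) = (k : ℚ)}
      zero_mem' := ⟨0, by simp⟩
      add_mem' := by
        rintro k k' ⟨m, hm⟩ ⟨m', hm'⟩
        refine ⟨m + m', ?_⟩
        have : (fun i => ((m + m') i : ℚ)) = (fun i => (m i : ℚ)) + fun i => (m' i : ℚ) := by
          funext i; simp
        rw [this, dotProduct_add, hm, hm']
        push_cast; ring
      neg_mem' := by
        rintro k ⟨m, hm⟩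
        refine ⟨-m, ?_⟩
        have : (fun i => ((-m) i : ℚ)) = -(fun i => (m i : ℚ)) := by funext i; simp
        rw [this, dotProduct_neg, hm]
        push_cast; ring }
  obtain ⟨d, hd⟩ := Int.subgroup_cyclic H
  have hmemH : ∀ k : ℤ, k ∈ H ↔ d ∣ k := by
    intro k
    rw [hd, AddSubgroup.mem_closure_singleton]
    constructor
    · rintro ⟨z, rfl⟩; exact ⟨z, by simp [zsmul_eq_mul, Int.cast_id, mul_comm]⟩
    · rintro ⟨z, rfl⟩; exact ⟨z, by simp [zsmul_eq_mul, Int.cast_id, mul_comm]⟩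
  have hvalH : ∀ m : Fin n → ℤ, ∃ k : ℤ, k ∈ H ∧
      dotProduct w (fun i => (m i : ℚ)) = (k : ℚ) := by
    intro m
    obtain ⟨k, hk⟩ := hv m
    rw [hlin] at hk
    exact ⟨k, ⟨m, hk⟩, hk⟩
  -- d ≠ 0
  have hdne : d ≠ 0 := by
    intro hd0
    have hw0 : w = 0 := by
      funext i
      obtain ⟨k, hkH, hk⟩ := hvalH (Pi.single i 1)
      have hdvd := (hmemH k).mp hkH
      rw [hd0] at hdvd
      have hk0 : k = 0 := zero_dvd_iff.mp hdvd
      have hsingle : (fun j => ((Pi.single i 1 : Fin n → ℤ) j : ℚ)) = Pi.single i 1 := by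
        funext j
        by_cases h : j = i <;> simp [Pi.single_apply, h]
      rw [hsingle, dotProduct_single, mul_one, hk0] at hk
      simpa using hk
    have : a = 0 := by rw [ha, hlin, hw0, zero_dotProduct]
    exact ha0 this
  -- d = ±1 via primitivity applied to (1/d) • v
  have hd1 : d = 1 ∨ d = -1 := by
    have hdual : ((d : ℚ)⁻¹) • v ∈ latDual G := by
      intro m
      obtain ⟨k, hkH, hk⟩ := hvalH m
      obtain ⟨z, rfl⟩ := (hmemH k).mp hkH
      refine ⟨z, ?_⟩
      rw [hsmul, hlin, hk]
      push_cast
      field_simp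
    obtain ⟨k, hk⟩ := hscal _ hdual
    have hdk : (d : ℚ) * (k : ℚ) = 1 := by
      rw [← hk]
      field_simp
    have : d * k = 1 := by exact_mod_cast hdk
    exact Int.isUnit_iff.mp (IsUnit.of_mul_eq_one (a := d) k this)
  -- a vector x₀ with (v, x₀) = 1
  have hdH : d ∈ H := by rw [hd]; exact AddSubgroup.mem_closure_singleton.mpr ⟨1, one_smul _ _⟩
  obtain ⟨m₀, hm₀⟩ := hdH
  have hx₀ : ∃ x₀ : Fin n → ℤ, dotProduct w (fun i => (x₀ i : ℚ)) = 1 := by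
    rcases hd1 with h | h
    · exact ⟨m₀, by rw [hm₀, h]; norm_num⟩
    · refine ⟨-m₀, ?_⟩
      have : (fun i => ((-m₀) i : ℚ)) = -(fun i => (m₀ i : ℚ)) := by funext i; simp
      rw [this, dotProduct_neg, hm₀, h]
      norm_num
  obtain ⟨x₀, hx₀⟩ := hx₀
  -- apply the reflection hypothesis at x₀
  have hxL : (fun i => ((x₀ i : ℚ))) ∈ latL n := ⟨x₀, rfl⟩
  have href := hrefl _ hxL
  have hBx : latBF G v (fun i => ((x₀ i : ℚ))) = 1 := by rw [hlin, hx₀]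
  rw [hBx, mul_one] at href
  obtain ⟨m₁, hm₁⟩ := href
  have hsv : (2 / a) • v = fun i => (((x₀ - m₁) i : ℚ)) := by
    funext i
    have := congrFun hm₁ i
    simp only [Pi.sub_apply, Pi.smul_apply] at this ⊢
    push_cast
    linarith
  -- primitivity applied to (2/a) • v
  have hsdual : (2 / a) • v ∈ latDual G := by
    rw [hsv]
    exact latL_subset_latDual G ⟨x₀ - m₁, rfl⟩
  obtain ⟨k, hk⟩ := hscal _ hsdual
  have hkneg : k < 0 := by
    have h2a : 2 / a < 0 := div_neg_of_pos_of_neg (by norm_num) hneg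
    have : (k : ℚ) < 0 := hk ▸ h2a
    exact_mod_cast this
  refine ⟨-k, by omega, ?_, ?_⟩
  · have hk0 : (k : ℚ) ≠ 0 := Int.cast_ne_zero.mpr (by omega)
    have h2 : (k : ℚ) * a = 2 := by
      have := (div_eq_iff ha0).mp hk
      linarith
    push_cast
    rw [neg_div_neg_eq, eq_div_iff hk0]
    linarith
  · refine ⟨-(x₀ - m₁), ?_⟩
    funext i
    have h1 := congrFun hsv i
    simp only [Pi.smul_apply, smul_eq_mul] at h1
    rw [hk] at h1
    simp only [Pi.neg_apply, Pi.sub_apply, Pi.smul_apply, smul_eq_mul] at h1 ⊢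
    push_cast at h1 ⊢
    linarith
end

section
/- Let p be an odd prime and let V be a finite-dimensional vector space over the field with p elements, equipped with a quadratic form Q whose associated bilinear form is nondegenerate. Then for any two nonzero vectors v, w ∈ V with Q(v) = Q(w) there exists a linear isometry σ of (V,Q) (an invertible linear map preserving Q) with σ(v) = w. (In particular, two nonzero vectors of equal norm in the p-part of a discriminant form, p odd, are equivalent under its automorphism group.) -/
namespace Stmt12Aux

open QuadraticMap

variable {p : ℕ} [Fact p.Prime] {V : Type} [AddCommGroup V] [Module (ZMod p) V]
variable (Q : QuadraticForm (ZMod p) V)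

lemma q_add (x y : V) : Q (x + y) = Q x + Q y + polar Q x y := by
  simp [QuadraticMap.polar]

/-- Reflection in `u` (as a plain linear map). -/
noncomputable def refl (u : V) : V →ₗ[ZMod p] V where
  toFun x := x - ((Q u)⁻¹ * polar Q x u) • u
  map_add' x y := by
    simp only [polar_add_left, mul_add, add_smul]
    abel
  map_smul' c x := by
    simp only [polar_smul_left, smul_eq_mul, RingHom.id_apply, smul_sub, smul_smul]
    ring_nf

lemma refl_apply (u x : V) : refl Q u x = x - ((Q u)⁻¹ * polar Q x u) • u := rfl

lemma q_refl (u : V) (hu : Q u ≠ 0) (x : V) : Q (refl Q u x) = Q x := by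
  set c : ZMod p := (Q u)⁻¹ * polar Q x u with hc
  have : refl Q u x = x + (-c) • u := by
    rw [refl_apply, sub_eq_add_neg, neg_smul]
  rw [this, q_add, QuadraticMap.map_smul, polar_smul_right]
  have hcu : c * Q u = polar Q x u := by
    rw [hc, mul_comm, ← mul_assoc, mul_inv_cancel₀ hu, one_mul]
  have : (-c * -c) * Q u = c * (c * Q u) := by ring
  rw [smul_eq_mul, smul_eq_mul, this, hcu]
  ring

lemma polar_refl (u : V) (hu : Q u ≠ 0) (x : V) :
    polar Q (refl Q u x) u = - polar Q x u := by
  rw [refl_apply, polar_sub_left, polar_smul_left, polar_self, smul_eq_mul]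
  have h2Q : (2 : ℕ) • Q u = 2 * Q u := by simp [nsmul_eq_mul]
  rw [h2Q]
  field_simp
  ring

lemma refl_refl (u : V) (hu : Q u ≠ 0) (x : V) : refl Q u (refl Q u x) = x := by
  rw [refl_apply, polar_refl Q u hu, refl_apply]
  rw [mul_neg, neg_smul, sub_neg_eq_add, sub_add_cancel]

/-- Reflection in `u` as a linear equivalence. -/
noncomputable def reflEquiv (u : V) (hu : Q u ≠ 0) : V ≃ₗ[ZMod p] V :=
  LinearEquiv.ofLinear (refl Q u) (refl Q u)
    (by ext x; exact refl_refl Q u hu x) (by ext x; exact refl_refl Q u hu x)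

lemma reflEquiv_apply (u : V) (hu : Q u ≠ 0) (x : V) :
    reflEquiv Q u hu x = refl Q u x := rfl

lemma refl_maps (v w : V) (hvw : Q v = Q w) (h : Q (v - w) ≠ 0) :
    refl Q (v - w) v = w := by
  have hpol : polar Q v (v - w) = Q (v - w) := by
    have : Q (v - w) = Q (v + (-w)) := by rw [sub_eq_add_neg]
    rw [this, q_add, QuadraticMap.map_neg, polar_neg_right, polar_sub_right, polar_self,
      two_smul, hvw]
    ring
  rw [refl_apply, hpol, inv_mul_cancel₀ h, one_smul, sub_sub_cancel]

end Stmt12Aux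

open Stmt12Aux QuadraticMap

/-- Witt-type extension for odd primes: if `V` is a finite-dimensional vector space
over `𝔽_p` (`p` an odd prime) with a quadratic form `Q` whose polar bilinear form is
nondegenerate, then any two nonzero vectors of equal norm are related by a linear
isometry of `(V, Q)`. -/
theorem stmt12 (p : ℕ) [Fact p.Prime] (hodd : p ≠ 2)
    (V : Type) [AddCommGroup V] [Module (ZMod p) V] [FiniteDimensional (ZMod p) V]
    (Q : QuadraticForm (ZMod p) V)
    (hQ : ∀ x : V, (∀ y : V, QuadraticMap.polar Q x y = 0) → x = 0)
    (v w : V) (hv : v ≠ 0) (hw : w ≠ 0) (hvw : Q v = Q w) :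
    ∃ σ : V ≃ₗ[ZMod p] V, (∀ x : V, Q (σ x) = Q x) ∧ σ v = w := by
  have h2 : (2 : ZMod p) ≠ 0 := by
    have hp' := (Fact.out : p.Prime)
    have h : ((2 : ℕ) : ZMod p) ≠ 0 := by
      rw [Ne, ZMod.natCast_eq_zero_iff]
      intro hd
      exact hodd ((Nat.prime_dvd_prime_iff_eq hp' Nat.prime_two).mp hd)
    exact_mod_cast h
  by_cases h1 : Q (v - w) ≠ 0
  · exact ⟨reflEquiv Q (v - w) h1, fun x => q_refl Q _ h1 x, refl_maps Q v w hvw h1⟩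
  by_cases hp : Q (v + w) ≠ 0
  · -- reflect onto -w, then negate
    have hvw' : Q v = Q (-w) := by rw [QuadraticMap.map_neg]; exact hvw
    have h1' : Q (v - (-w)) ≠ 0 := by rwa [sub_neg_eq_add]
    refine ⟨(reflEquiv Q (v - (-w)) h1').trans (LinearEquiv.neg (ZMod p)), ?_, ?_⟩
    · intro x
      simp only [LinearEquiv.trans_apply, LinearEquiv.neg_apply, QuadraticMap.map_neg]
      exact q_refl Q _ h1' x
    · simp only [LinearEquiv.trans_apply, LinearEquiv.neg_apply,
        reflEquiv_apply, refl_maps Q v (-w) hvw' h1', neg_neg]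
  · -- totally isotropic case
    push_neg at h1 hp
    have hsub : Q (v - w) = Q v + Q w - polar Q v w := by
      rw [sub_eq_add_neg, q_add, QuadraticMap.map_neg, polar_neg_right]; ring
    have hadd : Q (v + w) = Q v + Q w + polar Q v w := q_add Q v w
    have hq4 : (2 : ZMod p) * (2 * Q v) = 0 := by
      have : Q (v - w) + Q (v + w) = 2 * (2 * Q v) := by
        rw [hsub, hadd, ← hvw]; ring
      rw [← this, h1, hp, add_zero]
    have hQv : Q v = 0 := by
      rcases mul_eq_zero.mp hq4 with h | h
      · exact absurd h h2
      rcases mul_eq_zero.mp h with h | h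
      · exact absurd h h2
      · exact h
    have hQw : Q w = 0 := hvw ▸ hQv
    have hpvw : polar Q v w = 0 := by
      have := hadd
      rw [hp, hQv, hQw] at this
      simpa using this.symm
    -- find u with polar Q v u ≠ 0 and polar Q w u ≠ 0
    obtain ⟨a, ha⟩ : ∃ a, polar Q v a ≠ 0 := by
      by_contra hcon; push_neg at hcon; exact hv (hQ v hcon)
    obtain ⟨b, hb⟩ : ∃ b, polar Q w b ≠ 0 := by
      by_contra hcon; push_neg at hcon; exact hw (hQ w hcon)
    obtain ⟨u, hua, hub⟩ : ∃ u, polar Q v u ≠ 0 ∧ polar Q w u ≠ 0 := by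
      by_cases hwa : polar Q w a ≠ 0
      · exact ⟨a, ha, hwa⟩
      by_cases hvb : polar Q v b ≠ 0
      · exact ⟨b, hvb, hb⟩
      push_neg at hwa hvb
      refine ⟨a + b, ?_, ?_⟩
      · rwa [polar_add_right, hvb, add_zero]
      · rwa [polar_add_right, hwa, zero_add]
    -- build isotropic z with polar Q v z ≠ 0 and polar Q w z ≠ 0
    set s : ZMod p := -(Q u) * (polar Q v u)⁻¹ with hs
    set z : V := u + s • v with hz
    have hpvz : polar Q v z = polar Q v u := by
      rw [hz, polar_add_right, polar_smul_right, polar_self, two_smul, hQv]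
      simp
    have hpwz : polar Q w z = polar Q w u := by
      rw [hz, polar_add_right, polar_smul_right, polar_comm Q w v, hpvw]
      simp
    have hQz : Q z = 0 := by
      rw [hz, q_add, QuadraticMap.map_smul, hQv, polar_smul_right, polar_comm Q u v,
        smul_eq_mul, smul_eq_mul, hs]
      field_simp
      ring
    have hQvz : Q (v - z) ≠ 0 := by
      have : Q (v - z) = -polar Q v z := by
        rw [sub_eq_add_neg, q_add, QuadraticMap.map_neg, polar_neg_right, hQv, hQz]; ring
      rw [this, hpvz]
      simpa using hua
    have hQzw : Q (z - w) ≠ 0 := by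
      have : Q (z - w) = -polar Q w z := by
        rw [sub_eq_add_neg, q_add, QuadraticMap.map_neg, polar_neg_right, hQw, hQz,
          polar_comm]
        ring
      rw [this, hpwz]
      simpa using hub
    have hQvz' : Q v = Q z := by rw [hQv, hQz]
    have hQzw' : Q z = Q w := by rw [hQz, hQw]
    refine ⟨(reflEquiv Q (v - z) hQvz).trans (reflEquiv Q (z - w) hQzw), ?_, ?_⟩
    · intro x
      simp only [LinearEquiv.trans_apply, reflEquiv_apply]
      rw [q_refl Q _ hQzw, q_refl Q _ hQvz]
    · simp only [LinearEquiv.trans_apply, reflEquiv_apply]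
      rw [refl_maps Q v z hQvz' hQvz, refl_maps Q z w hQzw' hQzw]
end

section
/- Let f : ℍ → ℂ be a holomorphic function satisfying f((aτ+b)/(cτ+d)) = (cτ+d)²·f(τ) for every [[a,b],[c,d]] ∈ SL₂(ℤ) and τ ∈ ℍ, and suppose f is meromorphic at the cusp: there exist an integer N and complex coefficients (a_n)_{n ∈ ℤ} with a_n = 0 for n < −N such that f(τ) = Σ_{n ∈ ℤ} a_n·e^{2πinτ} for all τ ∈ ℍ, the series converging absolutely. Then the constant term vanishes: a_0 = 0. -/
open Real

noncomputable def Fprim (a : ℤ → ℂ) (z : ℂ) : ℂ :=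
  a 0 * z + ∑' n : ℤ, (if n = 0 then 0 else a n / (2 * (π : ℂ) * Complex.I * n)) *
    Complex.exp (2 * (π : ℂ) * Complex.I * (n : ℂ) * z)

lemma norm_qterm (c : ℂ) (n : ℤ) (z : ℂ) :
    ‖c * Complex.exp (2 * (π : ℂ) * Complex.I * (n : ℂ) * z)‖
      = ‖c‖ * Real.exp (-(2 * π * n * z.im)) := by
  rw [norm_mul, Complex.norm_exp]
  congr 2
  simp [Complex.mul_re, Complex.mul_im]

lemma hasDerivAt_qterm (c : ℂ) (n : ℤ) (y : ℂ) :
    HasDerivAt (fun z => c * Complex.exp (2 * (π : ℂ) * Complex.I * (n : ℂ) * z))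
      (c * (2 * (π : ℂ) * Complex.I * (n : ℂ)) *
        Complex.exp (2 * (π : ℂ) * Complex.I * (n : ℂ) * y)) y := by
  have h1 : HasDerivAt (fun z : ℂ => 2 * (π : ℂ) * Complex.I * (n : ℂ) * z)
      (2 * (π : ℂ) * Complex.I * (n : ℂ)) y := by
    simpa using (hasDerivAt_id y).const_mul (2 * (π : ℂ) * Complex.I * (n : ℂ))
  have h2 := (Complex.hasDerivAt_exp (2 * (π : ℂ) * Complex.I * (n : ℂ) * y)).comp y h1
  have h3 := h2.const_mul c
  exact h3.congr_deriv (by ring)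

lemma two_pi_I_n_ne (n : ℤ) (hn : n ≠ 0) : (2 * (π : ℂ) * Complex.I * (n : ℂ)) ≠ 0 := by
  have : ((n : ℂ)) ≠ 0 := Int.cast_ne_zero.mpr hn
  simp [Real.pi_ne_zero, Complex.I_ne_zero, this, Complex.ofReal_ne_zero]

lemma hasDerivAt_Fprim (a : ℤ → ℂ)
    (habs : ∀ τ : ℂ, 0 < τ.im →
      Summable (fun m : ℤ => ‖a m * Complex.exp (2 * (π : ℂ) * Complex.I * (m : ℂ) * τ)‖))
    (τ : ℂ) (hτ : 0 < τ.im) :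
    HasDerivAt (Fprim a)
      (∑' n : ℤ, a n * Complex.exp (2 * (π : ℂ) * Complex.I * (n : ℂ) * τ)) τ := by
  set δ := τ.im / 2 with hδ
  set M := τ.im + 1 with hM
  have hδpos : 0 < δ := by positivity
  have hMpos : 0 < M := by positivity
  set t : Set ℂ := {z : ℂ | δ < z.im} ∩ {z : ℂ | z.im < M} with ht
  have htop : IsOpen t :=
    ((isOpen_Ioi).preimage Complex.continuous_im).inter
      ((isOpen_Iio).preimage Complex.continuous_im)
  have htconv : Convex ℝ t := (convex_halfSpace_im_gt δ).inter (convex_halfSpace_im_lt M)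
  have htpre : IsPreconnected t := htconv.isPreconnected
  have hτt : τ ∈ t := by
    constructor
    · simp [hδ]; linarith
    · simp [hM]
  set u : ℤ → ℝ := fun n =>
    ‖a n * Complex.exp (2 * (π : ℂ) * Complex.I * (n : ℂ) * ((δ : ℂ) * Complex.I))‖ +
    ‖a n * Complex.exp (2 * (π : ℂ) * Complex.I * (n : ℂ) * ((M : ℂ) * Complex.I))‖ with hu
  have hδim : ((δ : ℂ) * Complex.I).im = δ := by simp
  have hMim : ((M : ℂ) * Complex.I).im = M := by simp
  have hus : Summable u := by
    exact (habs _ (by simp [hδpos])).add (habs _ (by simp [hMpos]))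
  set g : ℤ → ℂ → ℂ := fun n z =>
    (if n = 0 then 0 else a n / (2 * (π : ℂ) * Complex.I * n)) *
      Complex.exp (2 * (π : ℂ) * Complex.I * (n : ℂ) * z) with hg
  set g' : ℤ → ℂ → ℂ := fun n z =>
    (if n = 0 then 0 else a n) * Complex.exp (2 * (π : ℂ) * Complex.I * (n : ℂ) * z) with hg'
  have hgderiv : ∀ n : ℤ, ∀ y ∈ t, HasDerivAt (g n) (g' n y) y := by
    intro n y _
    have := hasDerivAt_qterm (if n = 0 then 0 else a n / (2 * (π : ℂ) * Complex.I * n)) n y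
    convert this using 1
    simp only [hg']
    by_cases hn : n = 0
    · simp [hn]
    · simp only [hn, if_false]
      field_simp [two_pi_I_n_ne n hn]
  have hbound : ∀ n : ℤ, ∀ y ∈ t, ‖g' n y‖ ≤ u n := by
    intro n y hy
    have h1 : ‖g' n y‖ ≤ ‖a n‖ * Real.exp (-(2 * π * n * y.im)) := by
      rw [hg', norm_qterm]
      apply mul_le_mul_of_nonneg_right _ (Real.exp_nonneg _)
      by_cases hn : n = 0 <;> simp [hn]
    rcases le_or_gt 0 (n : ℝ) with hn0 | hn0
    · have h2 : ‖a n‖ * Real.exp (-(2 * π * n * y.im)) ≤ u n := by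
        rw [hu]
        have h4 : ‖a n‖ * Real.exp (-(2 * π * n * y.im)) ≤
            ‖a n * Complex.exp (2 * (π : ℂ) * Complex.I * (n : ℂ) * ((δ : ℂ) * Complex.I))‖ := by
          rw [norm_qterm, hδim]
          apply mul_le_mul_of_nonneg_left _ (norm_nonneg _)
          apply Real.exp_le_exp.mpr
          have h3 : δ ≤ y.im := le_of_lt hy.1
          nlinarith [mul_nonneg (mul_nonneg (by positivity : (0:ℝ) ≤ 2 * π) hn0)
            (sub_nonneg.mpr h3)]
        exact le_add_of_le_of_nonneg h4 (norm_nonneg _)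
      linarith
    · have h2 : ‖a n‖ * Real.exp (-(2 * π * n * y.im)) ≤ u n := by
        rw [hu]
        have h4 : ‖a n‖ * Real.exp (-(2 * π * n * y.im)) ≤
            ‖a n * Complex.exp (2 * (π : ℂ) * Complex.I * (n : ℂ) * ((M : ℂ) * Complex.I))‖ := by
          rw [norm_qterm, hMim]
          apply mul_le_mul_of_nonneg_left _ (norm_nonneg _)
          apply Real.exp_le_exp.mpr
          have h3 : y.im ≤ M := le_of_lt hy.2
          nlinarith [mul_nonneg (mul_nonneg (by positivity : (0:ℝ) ≤ 2 * π)
            (neg_nonneg.mpr hn0.le)) (sub_nonneg.mpr h3)]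
        exact le_add_of_nonneg_of_le (norm_nonneg _) h4
      linarith
  have hg0 : Summable fun n => g n τ := by
    apply Summable.of_norm_bounded (habs τ hτ)
    intro n
    rw [hg]
    by_cases hn : n = 0
    · simp [hn]
    · simp only [hn, if_false]
      rw [norm_qterm, norm_qterm]
      apply mul_le_mul_of_nonneg_right _ (Real.exp_nonneg _)
      rw [norm_div]
      apply div_le_self (norm_nonneg _)
      have h2 : (2 * (π : ℂ) * Complex.I * (n : ℂ)) = ((2 * π * n : ℝ) : ℂ) * Complex.I := by
        push_cast; ring
      rw [h2, norm_mul, Complex.norm_I, mul_one, Complex.norm_real, Real.norm_eq_abs, abs_mul]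
      have h3 : (1 : ℝ) ≤ |(n : ℝ)| := by
        rw [← Int.cast_abs]
        exact_mod_cast Int.one_le_abs hn
      nlinarith [Real.pi_gt_three, abs_of_pos (by positivity : (0:ℝ) < 2 * π)]
  have hsum := hasDerivAt_tsum_of_isPreconnected hus htop htpre hgderiv hbound hτt hg0 hτt
  have hlin : HasDerivAt (fun z : ℂ => a 0 * z) (a 0) τ := by
    simpa using (hasDerivAt_id τ).const_mul (a 0)
  have htotal := hlin.add hsum
  have habsτ : Summable fun n : ℤ => a n * Complex.exp (2 * (π : ℂ) * Complex.I * (n : ℂ) * τ) :=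
    Summable.of_norm (habs τ hτ)
  have hval : a 0 + ∑' n : ℤ, g' n τ =
      ∑' n : ℤ, a n * Complex.exp (2 * (π : ℂ) * Complex.I * (n : ℂ) * τ) := by
    rw [habsτ.tsum_eq_add_tsum_ite 0]
    congr 1
    · simp
    · apply tsum_congr
      intro n
      rw [hg']
      by_cases hn : n = 0 <;> simp [hn]
  rw [← hval]
  exact htotal

lemma Fprim_add_one (a : ℤ → ℂ) (z : ℂ) : Fprim a (z + 1) = Fprim a z + a 0 := by
  rw [Fprim, Fprim]
  have h : ∀ n : ℤ, (if n = 0 then 0 else a n / (2 * (π : ℂ) * Complex.I * n)) *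
      Complex.exp (2 * (π : ℂ) * Complex.I * (n : ℂ) * (z + 1)) =
      (if n = 0 then 0 else a n / (2 * (π : ℂ) * Complex.I * n)) *
      Complex.exp (2 * (π : ℂ) * Complex.I * (n : ℂ) * z) := by
    intro n
    congr 1
    rw [show 2 * (π : ℂ) * Complex.I * (n : ℂ) * (z + 1)
        = 2 * (π : ℂ) * Complex.I * (n : ℂ) * z + (n : ℂ) * (2 * (π : ℂ) * Complex.I) by ring,
      Complex.exp_add, Complex.exp_int_mul_two_pi_mul_I, mul_one]
  rw [tsum_congr h]
  ring

noncomputable def zrho : ℂ := ⟨-1/2, Real.sqrt 3 / 2⟩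

lemma zrho_im : 0 < zrho.im := by
  simp [zrho, Complex.im]

lemma zrho_fixed : -(zrho + 1)⁻¹ = zrho := by
  have h3 : Real.sqrt 3 * Real.sqrt 3 = 3 := Real.mul_self_sqrt (by norm_num)
  have hq : zrho ^ 2 + zrho + 1 = 0 := by
    apply Complex.ext <;>
      simp [zrho, pow_two, Complex.mul_re, Complex.mul_im, Complex.add_re, Complex.add_im] <;>
      nlinarith [h3]
  have hne : zrho + 1 ≠ 0 := fun h => by
    have h5 : (zrho + 1).im = Real.sqrt 3 / 2 := by simp [zrho]
    rw [h] at h5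
    simp at h5
    nlinarith [Real.sqrt_pos.mpr (by norm_num : (0:ℝ) < 3)]
  field_simp
  linear_combination -hq

/-- A weight 2 modular form for `SL₂(ℤ)`, holomorphic on `ℍ` and meromorphic at the
cusp (with absolutely convergent `q`-expansion `Σ_{n ≥ −N} aₙ e^{2πinτ}`), has
vanishing constant term: `a₀ = 0`. -/
theorem stmt14 (f : ℂ → ℂ)
    (hol : DifferentiableOn ℂ f {z : ℂ | 0 < z.im})
    (htrans : ∀ g : Matrix.SpecialLinearGroup (Fin 2) ℤ, ∀ τ : ℂ, 0 < τ.im →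
      f ((((g : Matrix (Fin 2) (Fin 2) ℤ) 0 0 : ℂ) * τ +
            ((g : Matrix (Fin 2) (Fin 2) ℤ) 0 1 : ℂ)) /
          (((g : Matrix (Fin 2) (Fin 2) ℤ) 1 0 : ℂ) * τ +
            ((g : Matrix (Fin 2) (Fin 2) ℤ) 1 1 : ℂ))) =
        (((g : Matrix (Fin 2) (Fin 2) ℤ) 1 0 : ℂ) * τ +
            ((g : Matrix (Fin 2) (Fin 2) ℤ) 1 1 : ℂ)) ^ 2 * f τ)
    (N : ℤ) (a : ℤ → ℂ) (hvanish : ∀ m : ℤ, m < -N → a m = 0)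
    (habs : ∀ τ : ℂ, 0 < τ.im →
      Summable (fun m : ℤ => ‖a m * Complex.exp (2 * (π : ℂ) * Complex.I * (m : ℂ) * τ)‖))
    (hexp : ∀ τ : ℂ, 0 < τ.im →
      f τ = ∑' m : ℤ, a m * Complex.exp (2 * (π : ℂ) * Complex.I * (m : ℂ) * τ)) :
    a 0 = 0 := by
  -- the primitive
  set F := Fprim a with hFdef
  have hF : ∀ τ : ℂ, 0 < τ.im → HasDerivAt F (f τ) τ := by
    intro τ hτ
    rw [hexp τ hτ]
    exact hasDerivAt_Fprim a habs τ hτ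
  -- transformation laws
  have hS : ∀ τ : ℂ, 0 < τ.im → f (-τ⁻¹) = τ ^ 2 * f τ := by
    intro τ hτ
    have hτ0 : τ ≠ 0 := fun h => by simp [h] at hτ
    have hS := htrans ⟨!![0, -1; 1, 0], by simp [Matrix.det_fin_two_of]⟩ τ hτ
    simp at hS
    convert hS using 2
    field_simp
  have hU : ∀ τ : ℂ, 0 < τ.im → f (-(τ + 1)⁻¹) = (τ + 1) ^ 2 * f τ := by
    intro τ hτ
    have hτ0 : τ + 1 ≠ 0 := fun h => by
      have h5 : (τ + 1).im = τ.im := by simp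
      rw [h] at h5; simp at h5; linarith
    have hS := htrans ⟨!![0, -1; 1, 1], by simp [Matrix.det_fin_two_of]⟩ τ hτ
    simp at hS
    convert hS using 2
    field_simp
  -- membership facts
  have him_inv : ∀ τ : ℂ, 0 < τ.im → 0 < (-τ⁻¹).im := by
    intro τ hτ
    have hτ0 : τ ≠ 0 := fun h => by simp [h] at hτ
    have h1 : (-τ⁻¹).im = τ.im / Complex.normSq τ := by
      simp [Complex.inv_im]
      ring
    rw [h1]
    exact div_pos hτ (Complex.normSq_pos.mpr hτ0)
  have him_add : ∀ τ : ℂ, 0 < τ.im → 0 < (τ + 1).im := by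
    intro τ hτ; simpa using hτ
  -- derivatives of composites
  have hFS : ∀ τ : ℂ, 0 < τ.im → HasDerivAt (fun z => F (-z⁻¹)) (f τ) τ := by
    intro τ hτ
    have hτ0 : τ ≠ 0 := fun h => by simp [h] at hτ
    have hinner : HasDerivAt (fun z : ℂ => -z⁻¹) ((τ ^ 2)⁻¹) τ := by
      exact (hasDerivAt_inv hτ0).neg.congr_deriv (by simp)
    have houter := hF (-τ⁻¹) (him_inv τ hτ)
    have hcomp := houter.comp τ hinner
    exact hcomp.congr_deriv (by rw [hS τ hτ]; field_simp)
  have hFU : ∀ τ : ℂ, 0 < τ.im → HasDerivAt (fun z => F (-(z + 1)⁻¹)) (f τ) τ := by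
    intro τ hτ
    have hτ1 : 0 < (τ + 1).im := him_add τ hτ
    have hτ0 : τ + 1 ≠ 0 := fun h => by rw [h] at hτ1; simp at hτ1
    have h1 : HasDerivAt (fun z : ℂ => z + 1) 1 τ := (hasDerivAt_id τ).add_const 1
    have h2 : HasDerivAt (fun z : ℂ => -(z + 1)⁻¹) (((τ + 1) ^ 2)⁻¹) τ := by
      have := ((hasDerivAt_inv hτ0).comp τ h1).neg
      exact this.congr_deriv (by simp)
    have houter := hF (-(τ + 1)⁻¹) (him_inv (τ + 1) hτ1)
    have hcomp := houter.comp τ h2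
    exact hcomp.congr_deriv (by rw [hU τ hτ]; field_simp)
  -- constancy of functions with zero derivative on the upper half plane
  have hconst : ∀ G : ℂ → ℂ, (∀ x : ℂ, 0 < x.im → HasDerivAt G 0 x) →
      ∀ x y : ℂ, 0 < x.im → 0 < y.im → G x = G y := by
    intro G hG x y hx hy
    have hconv : Convex ℝ {z : ℂ | 0 < z.im} := convex_halfSpace_im_gt 0
    have hb := hconv.norm_image_sub_le_of_norm_hasDerivWithin_le
      (f' := fun _ => (0 : ℂ)) (C := 0)
      (fun z hz => (hG z hz).hasDerivWithinAt) (fun z _ => by simp) hx hy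
    rw [zero_mul] at hb
    exact (sub_eq_zero.mp (norm_le_zero_iff.mp hb)).symm
  -- the two difference functions are constant, and vanish at fixed points
  have hG2 : ∀ x : ℂ, 0 < x.im → F (-x⁻¹) - F x = 0 := by
    have hc := hconst (fun z => F (-z⁻¹) - F z)
      (fun x hx => ((hFS x hx).sub (hF x hx)).congr_deriv (sub_self _))
    intro x hx
    have h1 := hc x Complex.I hx (by simp)
    have hI : -Complex.I⁻¹ = Complex.I := by simp
    rw [hI] at h1
    rw [h1, sub_self]
  have hG3 : ∀ x : ℂ, 0 < x.im → F (-(x + 1)⁻¹) - F x = 0 := by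
    have hc := hconst (fun z => F (-(z + 1)⁻¹) - F z)
      (fun x hx => ((hFU x hx).sub (hF x hx)).congr_deriv (sub_self _))
    intro x hx
    have h1 := hc x zrho hx zrho_im
    rw [zrho_fixed] at h1
    rw [h1, sub_self]
  -- combine at τ = I
  have e1 := hG3 Complex.I (by simp)
  have e2 := hG2 (Complex.I + 1) (by simp)
  have e3 := Fprim_add_one a Complex.I
  rw [← hFdef] at e3
  linear_combination e1 - e2 - e3
end
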